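/- arXiv:2209.04370 — 4 statements merged into one kernel-verified Lean document; each statement's English description precedes it below -/
import Mathlib

section
/- With L = ε₁Le ≤ 1 and F(a²) > 0, one has R_O²(a²) = F(a²)(1+1/L) + C²/L ≥ R_S²(a²) = F(a²) + C² for every C² ≥ 0, with equality only if L = 1 and F(a²) = 0. Hence when ε₁Le ≤ 1 the steady threshold is always the smaller one. -/
/-- For `L = ε₁Le ≤ 1` the oscillatory threshold always dominates the steady one:
`R_O² ≥ R_S²`, with equality only if `L = 1` and `F(a²) = 0`. -/
theorem steady_threshold_smaller
    (F L C2 : ℝ) (hL0 : 0 < L) (hL : L ≤ 1) (hF : 0 < F) (hC : 0 ≤ C2) :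
    F * (1 + 1 / L) + C2 / L ≥ F + C2
      ∧ (F * (1 + 1 / L) + C2 / L = F + C2 → L = 1 ∧ F = 0) := by
  have hLne : L ≠ 0 := ne_of_gt hL0
  have key : F * (1 + 1 / L) + C2 / L > F + C2 := by
    rw [gt_iff_lt, div_eq_mul_inv, div_eq_mul_inv]
    have h1 : (1:ℝ) ≤ L⁻¹ := by
      rw [le_inv_comm₀ one_pos hL0]; simpa using hL
    nlinarith [mul_le_mul_of_nonneg_left h1 hC]
  exact ⟨le_of_lt key, fun h => absurd h (ne_of_gt key)⟩
end

section
/- Consider the 4×4 linear system h11 W_f + h12 W_p − R a² h13 Θ + C a² h13 Γ = 0, h21 W_f + h22 W_p − R a² h23 Θ + C a² h23 Γ = 0, R W_f + R W_p − (Λ + σ) Θ = 0, C W_f + C W_p − (Λ + ε₁Le σ) Γ = 0, with unknowns (W_f, W_p, Θ, Γ). If this system admits a nontrivial solution, and h13 h22 − h12 h23 + h11 h23 − h21 h13 ≠ 0, a² ≠ 0, then R² = ((Λ + σ)/a²)·(h11 h22 − h12 h21)/(h13 h22 − h12 h23 + h11 h23 − h21 h13) + C²·(Λ + σ)/(Λ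 + ε₁Le σ) (assuming Λ + ε₁Le σ ≠ 0). -/
/-!
A nontrivial solution lies in the kernel of the normal-mode matrix, so its determinant vanishes.
Expanding along the first row, the determinant is affine in `R²`, with leading coefficient
`-a² (Λ + ε₁Le σ) S`; when that coefficient is nonzero, the vanishing determinant determines `R²`.
-/

open Matrix

section NormalModeMatrix

variable {K : Type*} [CommRing K] (h11 h12 h13 h21 h22 h23 a2 R C μ ν : K)

def normalModeMatrix : Matrix (Fin 4) (Fin 4) K :=
  !![h11, h12, -(R * a2 * h13), C * a2 * h13;
     h21, h22, -(R * a2 * h23), C * a2 * h23;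
     R, R, -μ, 0;
     C, C, 0, -ν]

theorem normalModeMatrix_mulVec (Wf Wp Θ Γ : K) :
    normalModeMatrix h11 h12 h13 h21 h22 h23 a2 R C μ ν *ᵥ ![Wf, Wp, Θ, Γ] =
      ![h11 * Wf + h12 * Wp - R * a2 * h13 * Θ + C * a2 * h13 * Γ,
        h21 * Wf + h22 * Wp - R * a2 * h23 * Θ + C * a2 * h23 * Γ,
        R * Wf + R * Wp - μ * Θ,
        C * Wf + C * Wp - ν * Γ] := by
  ext i
  fin_cases i <;> simp [normalModeMatrix, mulVec, dotProduct, Fin.sum_univ_four] <;> ring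

theorem det_normalModeMatrix :
    (normalModeMatrix h11 h12 h13 h21 h22 h23 a2 R C μ ν).det =
      μ * ν * (h11 * h22 - h12 * h21)
        - a2 * (R ^ 2 * ν - C ^ 2 * μ) * (h13 * h22 - h12 * h23 + h11 * h23 - h21 * h13) := by
  simp [normalModeMatrix, det_succ_row_zero, Fin.sum_univ_succ, Fin.succAbove]
  ring

end NormalModeMatrix

theorem sq_eq_of_dispersion_eq_zero {K : Type*} [Field K] {M S a2 R C μ ν : K}
    (hS : S ≠ 0) (ha : a2 ≠ 0) (hν : ν ≠ 0)
    (h : μ * ν * M - a2 * (R ^ 2 * ν - C ^ 2 * μ) * S = 0) :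
    R ^ 2 = (μ / a2) * M / S + C ^ 2 * μ / ν := by
  field_simp
  linear_combination -h

/-- Dispersion relation (25): a nontrivial solution of the normal-mode system forces
`R² = ((Λ+σ)/a²)·(h11h22 − h12h21)/S + C²(Λ+σ)/(Λ+ε₁Le σ)`,
where `S = h13h22 − h12h23 + h11h23 − h21h13`. -/
theorem dispersion_relation
    (h11 h12 h13 h21 h22 h23 Λ a2 L σ R C : ℝ)
    (hS : h13 * h22 - h12 * h23 + h11 * h23 - h21 * h13 ≠ 0)
    (ha : a2 ≠ 0) (hden : Λ + L * σ ≠ 0)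
    (Wf Wp Θ Γ : ℝ)
    (hnontriv : ¬ (Wf = 0 ∧ Wp = 0 ∧ Θ = 0 ∧ Γ = 0))
    (e1 : h11 * Wf + h12 * Wp - R * a2 * h13 * Θ + C * a2 * h13 * Γ = 0)
    (e2 : h21 * Wf + h22 * Wp - R * a2 * h23 * Θ + C * a2 * h23 * Γ = 0)
    (e3 : R * Wf + R * Wp - (Λ + σ) * Θ = 0)
    (e4 : C * Wf + C * Wp - (Λ + L * σ) * Γ = 0) :
    R ^ 2 = ((Λ + σ) / a2) * (h11 * h22 - h12 * h21)
        / (h13 * h22 - h12 * h23 + h11 * h23 - h21 * h13)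
      + C ^ 2 * (Λ + σ) / (Λ + L * σ) := by
  have hv : ![Wf, Wp, Θ, Γ] ≠ 0 := by
    contrapose! hnontriv
    simpa [funext_iff, Fin.forall_fin_succ] using hnontriv
  have hker : normalModeMatrix h11 h12 h13 h21 h22 h23 a2 R C (Λ + σ) (Λ + L * σ) *ᵥ
      ![Wf, Wp, Θ, Γ] = 0 := by
    rw [normalModeMatrix_mulVec, e1, e2, e3, e4]
    simp
  have hdet := exists_mulVec_eq_zero_iff.mp ⟨_, hv, hker⟩
  rw [det_normalModeMatrix] at hdet
  exact sq_eq_of_dispersion_eq_zero hS ha hden hdet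
end

section
/- Let σ̄ ∈ ℂ with σ̄ = σ_R + iσ_I and suppose R² ∈ ℝ satisfies R² = ((Λ + σ̄)/a²)·K + C²(Λ + σ̄)/(Λ + Lσ̄) with K, a², Λ, C², L > 0 real. If σ_I ≠ 0 and σ_R = 0 (marginal oscillatory state), then equating imaginary parts forces K(Λ² + L²σ_I²) = C² a² Λ (L − 1), and equating real parts then gives R² = (Λ/a²)K(1 + 1/L) + C²/L. -/
/-- Marginal oscillatory state of the dispersion relation (25): if `R² ∈ ℝ`
satisfies `R² = ((Λ + iσ_I)/a²)K + C²(Λ + iσ_I)/(Λ + iLσ_I)` with `σ_I ≠ 0`, then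
the imaginary part forces `K(Λ² + L²σ_I²) = C²a²Λ(L − 1)` and the real part gives
the oscillatory threshold `R² = (Λ/a²)K(1 + 1/L) + C²/L`. -/
theorem marginal_oscillatory_state
    (K a2 Λ C2 L : ℝ) (hK : 0 < K) (ha : 0 < a2) (hΛ : 0 < Λ) (hC : 0 < C2)
    (hL : 0 < L) (σI : ℝ) (hσI : σI ≠ 0) (R2 : ℝ)
    (hdisp : (R2 : ℂ) = (((Λ : ℂ) + Complex.I * σI) / (a2 : ℂ)) * (K : ℂ)
        + (C2 : ℂ) * ((Λ : ℂ) + Complex.I * σI)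
            / ((Λ : ℂ) + (L : ℂ) * (Complex.I * σI))) :
    K * (Λ ^ 2 + L ^ 2 * σI ^ 2) = C2 * a2 * Λ * (L - 1)
      ∧ R2 = (Λ / a2) * K * (1 + 1 / L) + C2 / L := by
  have ha' : (a2 : ℂ) ≠ 0 := by exact_mod_cast ha.ne'
  have hden : ((Λ : ℂ) + (L : ℂ) * (Complex.I * σI)) ≠ 0 := by
    intro h
    have him := congrArg Complex.im h
    simp [Complex.add_im, Complex.mul_im] at him
    rcases him with h | h
    · exact hL.ne' h
    · exact hσI h
  replace hdisp : (R2 : ℂ) * ((a2 : ℂ) * ((Λ : ℂ) + (L : ℂ) * (Complex.I * σI)))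
      = ((Λ : ℂ) + Complex.I * σI) * (K : ℂ) * ((Λ : ℂ) + (L : ℂ) * (Complex.I * σI))
        + (C2 : ℂ) * ((Λ : ℂ) + Complex.I * σI) * (a2 : ℂ) := by
    rw [hdisp]
    linear_combination (((Λ : ℂ) + Complex.I * σI) * (K : ℂ) * ((Λ : ℂ) + (L : ℂ) * (Complex.I * σI))) * mul_inv_cancel₀ ha'
      + ((C2 : ℂ) * ((Λ : ℂ) + Complex.I * σI) * (a2 : ℂ)) * mul_inv_cancel₀ hden
  have hre := congrArg Complex.re hdisp
  have him := congrArg Complex.im hdisp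
  simp [Complex.add_re, Complex.add_im, Complex.mul_re, Complex.mul_im,
    Complex.ofReal_re, Complex.ofReal_im, Complex.I_re, Complex.I_im] at hre him
  -- hre : R2 * (a2 * Λ) = ... ; him similar
  have hL' : L ≠ 0 := hL.ne'
  have ha2 : a2 ≠ 0 := ha.ne'
  have h3 : R2 * a2 * L = K * Λ * (L + 1) + C2 * a2 := by
    have h4 : (R2 * a2 * L) * σI = (K * Λ * (L + 1) + C2 * a2) * σI := by
      linear_combination him
    exact mul_right_cancel₀ hσI h4
  have h2 : R2 = (Λ / a2) * K * (1 + 1 / L) + C2 / L := by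
    field_simp
    linear_combination h3
  refine ⟨?_, h2⟩
  linear_combination L * hre - Λ * h3
end

section
/- For L > 1, F > 0 fixed, the steady and oscillatory thresholds R_S²(C²) = F + C² and R_O²(C²) = F(1+1/L) + C²/L satisfy: min(R_S², R_O²) = R_S² for C² ≤ F/(L−1) and min(R_S², R_O²) = R_O² for C² ≥ F/(L−1); moreover the onset threshold min(R_S², R_O²) is a continuous, piecewise-affine, strictly increasing and concave function of C². -/
/-!
Both thresholds are affine in `C²`, with slopes `1 > 1/L`, and their difference is
`R_O² − R_S² = (1 − 1/L) (F/(L−1) − C²)`, which changes sign exactly at `C² = F/(L−1)`.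
The minimum of two continuous, strictly increasing, affine (hence concave) functions is again
continuous, strictly increasing and concave.
-/

open Set

theorem StrictMono.min {α β : Type*} [Preorder α] [LinearOrder β] {f g : α → β}
    (hf : StrictMono f) (hg : StrictMono g) : StrictMono fun x => min (f x) (g x) :=
  fun _ _ h => min_lt_min (hf h) (hg h)

noncomputable def steadyThreshold (F C2 : ℝ) : ℝ := F + C2

noncomputable def oscillatoryThreshold (F L C2 : ℝ) : ℝ := F * (1 + 1 / L) + C2 / L

section Thresholds

variable {F L : ℝ}

theorem oscillatoryThreshold_sub_steadyThreshold (hL : 1 < L) (C2 : ℝ) :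
    oscillatoryThreshold F L C2 - steadyThreshold F C2 = (1 - 1 / L) * (F / (L - 1) - C2) := by
  have hL0 : L ≠ 0 := by positivity
  have hL1 : L - 1 ≠ 0 := sub_ne_zero.2 hL.ne'
  unfold oscillatoryThreshold steadyThreshold
  field_simp
  ring

theorem one_sub_one_div_pos (hL : 1 < L) : 0 < 1 - 1 / L := by
  rw [sub_pos, div_lt_one (by positivity)]
  exact hL

theorem steadyThreshold_le_oscillatoryThreshold_iff (hL : 1 < L) (C2 : ℝ) :
    steadyThreshold F C2 ≤ oscillatoryThreshold F L C2 ↔ C2 ≤ F / (L - 1) := by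
  rw [← sub_nonneg, oscillatoryThreshold_sub_steadyThreshold hL,
    mul_nonneg_iff_of_pos_left (one_sub_one_div_pos hL), sub_nonneg]

theorem oscillatoryThreshold_le_steadyThreshold_iff (hL : 1 < L) (C2 : ℝ) :
    oscillatoryThreshold F L C2 ≤ steadyThreshold F C2 ↔ F / (L - 1) ≤ C2 := by
  rw [← sub_nonneg, ← neg_sub, oscillatoryThreshold_sub_steadyThreshold hL, ← mul_neg,
    mul_nonneg_iff_of_pos_left (one_sub_one_div_pos hL), neg_sub, sub_nonneg]

variable (F L)

theorem continuous_steadyThreshold : Continuous (steadyThreshold F) :=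
  continuous_const.add continuous_id

theorem continuous_oscillatoryThreshold : Continuous (oscillatoryThreshold F L) :=
  continuous_const.add (continuous_id.div_const L)

theorem strictMono_steadyThreshold : StrictMono (steadyThreshold F) :=
  fun _ _ h => add_lt_add_right h F

theorem strictMono_oscillatoryThreshold (hL : 0 < L) : StrictMono (oscillatoryThreshold F L) :=
  fun _ _ h => add_lt_add_right (div_lt_div_of_pos_right h hL) _

theorem concaveOn_steadyThreshold : ConcaveOn ℝ univ (steadyThreshold F) :=
  (concaveOn_const F convex_univ).add (concaveOn_id convex_univ)

theorem concaveOn_oscillatoryThreshold : ConcaveOn ℝ univ (oscillatoryThreshold F L) :=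
  ⟨convex_univ, fun x _ y _ a b _ _ hab => le_of_eq <| by
    simp only [oscillatoryThreshold, smul_eq_mul]
    linear_combination (F * (1 + 1 / L)) * hab⟩

end Thresholds

theorem onset_threshold_structure_general
    (F L : ℝ) (hL : 1 < L) :
    (∀ C2 : ℝ, C2 ≤ F / (L - 1) →
        min (F + C2) (F * (1 + 1 / L) + C2 / L) = F + C2)
      ∧ (∀ C2 : ℝ, F / (L - 1) ≤ C2 →
          min (F + C2) (F * (1 + 1 / L) + C2 / L) = F * (1 + 1 / L) + C2 / L)
      ∧ Continuous (fun C2 : ℝ => min (F + C2) (F * (1 + 1 / L) + C2 / L))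
      ∧ StrictMono (fun C2 : ℝ => min (F + C2) (F * (1 + 1 / L) + C2 / L))
      ∧ ConcaveOn ℝ Set.univ (fun C2 : ℝ => min (F + C2) (F * (1 + 1 / L) + C2 / L)) :=
  ⟨fun C2 h => min_eq_left ((steadyThreshold_le_oscillatoryThreshold_iff hL C2).2 h),
    fun C2 h => min_eq_right ((oscillatoryThreshold_le_steadyThreshold_iff hL C2).2 h),
    (continuous_steadyThreshold F).min (continuous_oscillatoryThreshold F L),
    (strictMono_steadyThreshold F).min (strictMono_oscillatoryThreshold F L (by positivity)),
    (concaveOn_steadyThreshold F).inf (concaveOn_oscillatoryThreshold F L)⟩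

/-- The physically relevant onset threshold `min(R_S², R_O²)`: it equals the steady
threshold for `C² ≤ F/(L−1)` and the oscillatory one for `C² ≥ F/(L−1)`, and is a
continuous, strictly increasing, concave (piecewise-affine) function of `C²`. -/
theorem onset_threshold_structure
    (F L : ℝ) (hF : 0 < F) (hL : 1 < L) :
    (∀ C2 : ℝ, C2 ≤ F / (L - 1) →
        min (F + C2) (F * (1 + 1 / L) + C2 / L) = F + C2)
      ∧ (∀ C2 : ℝ, F / (L - 1) ≤ C2 →
          min (F + C2) (F * (1 + 1 / L) + C2 / L) = F * (1 + 1 / L) + C2 / L)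
      ∧ Continuous (fun C2 : ℝ => min (F + C2) (F * (1 + 1 / L) + C2 / L))
      ∧ StrictMono (fun C2 : ℝ => min (F + C2) (F * (1 + 1 / L) + C2 / L))
      ∧ ConcaveOn ℝ Set.univ (fun C2 : ℝ => min (F + C2) (F * (1 + 1 / L) + C2 / L)) :=
  onset_threshold_structure_general F L hL
end
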